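/- The Lie subalgebra [ℂ_q, ℂ_q] (commutators with respect to the commutator bracket of the associative algebra ℂ_q) is spanned by the monomials t^a with a ∈ ℤ^{n+1} \ rad f, and ℂ_q = [ℂ_q, ℂ_q] ⊕ Z(ℂ_q) as vector spaces. -/

import Mathlib

/-- `σ(a,b) = ∏_{0 ≤ i ≤ j ≤ n} q_{ji}^{a_j b_i}`. -/
noncomputable def sig {n : ℕ} (q : Fin (n+1) → Fin (n+1) → ℂˣ)
    (a b : Fin (n+1) → ℤ) : ℂˣ :=
  ∏ i : Fin (n+1), ∏ j : Fin (n+1), if i ≤ j then q j i ^ (a j * b i) else 1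

/-- `f(a,b) = σ(a,b) σ(b,a)⁻¹`. -/
noncomputable def ff {n : ℕ} (q : Fin (n+1) → Fin (n+1) → ℂˣ)
    (a b : Fin (n+1) → ℤ) : ℂˣ :=
  sig q a b * (sig q b a)⁻¹

/-!
Write `T a * T b = σ(a,b) T (a+b)` with `σ` bimultiplicative. Then
`[T a, T b] = (σ(a,b) - σ(b,a)) T (a+b)`, and since
`σ(a+b,b) σ(b,a+b)⁻¹ = σ(a,b) σ(b,a)⁻¹` the coefficient vanishes exactly when `a + b ∈ rad f`; conversely every `T c` with `c ∉ rad f`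
is such a commutator up to a nonzero scalar. Comparing the coefficient of `T (a+b)` in
`T b * x = x * T b` shows that the centre is spanned by the `T a` with `a ∈ rad f`, and the
monomials split into those two families.
-/

open Submodule

section Spanning

variable {ι K C : Type*} [Field K] [Ring C] [Algebra K C] {T : ι → C}

theorem commutator_mem_of_span_eq_top (hspan : span K (Set.range T) = ⊤)
    {M : Submodule K C} (hM : ∀ a b, T a * T b - T b * T a ∈ M) (y z : C) :
    y * z - z * y ∈ M := by
  let bracket : C →ₗ[K] C →ₗ[K] C := LinearMap.mul K C - (LinearMap.mul K C).flip
  have hle : map₂ bracket ⊤ ⊤ ≤ M := by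
    rw [← hspan, map₂_span_span, span_le]
    rintro _ ⟨_, ⟨a, rfl⟩, _, ⟨b, rfl⟩, rfl⟩
    exact hM a b
  exact hle (apply_mem_map₂ bracket mem_top mem_top)

theorem mem_center_of_span_eq_top (hspan : span K (Set.range T) = ⊤)
    {y : C} (hy : ∀ b, T b * y = y * T b) : y ∈ Subalgebra.center K C := by
  have hle : span K (Set.range T) ≤ Subalgebra.toSubmodule (Subalgebra.centralizer K {y}) := by
    rw [span_le]
    rintro _ ⟨b, rfl⟩
    exact (Subalgebra.mem_centralizer_iff K).mpr fun _ hg => hg ▸ (hy b).symm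
  refine Subalgebra.mem_center_iff.mpr fun z => ?_
  exact ((Subalgebra.mem_centralizer_iff K).mp (hle (hspan ▸ mem_top)) y rfl).symm

end Spanning

section TwistedBasis

variable {A K C : Type*} [AddCommGroup A] [Field K] [Ring C] [Algebra K C]

/-- `rad f` for `f(a,b) = σ(a,b) σ(b,a)⁻¹`. -/
def radical (σ : A → A → Kˣ) : Set A := {a | ∀ b, σ a b = σ b a}

variable {σ : A → A → Kˣ}

theorem eq_swap_add_right_iff (hσl : ∀ a a' b, σ (a + a') b = σ a b * σ a' b)
    (hσr : ∀ a b b', σ a (b + b') = σ a b * σ a b') (a b : A) :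
    σ (a + b) b = σ b (a + b) ↔ σ a b = σ b a := by
  rw [hσl, hσr, mul_right_cancel_iff]

theorem commutator_eq_smul {T : A → C} (hT : ∀ a b, T a * T b = (σ a b : K) • T (a + b))
    (a b : A) : T a * T b - T b * T a = ((σ a b : K) - σ b a) • T (a + b) := by
  rw [hT, hT, add_comm b a, sub_smul]

namespace Module.Basis

variable (B : Basis A K C) (hB : ∀ a b, B a * B b = (σ a b : K) • B (a + b))
include hB

theorem repr_mul_basis_apply_add (x : C) (a b : A) :
    B.repr (x * B b) (a + b) = σ a b * B.repr x a := by
  have h := B.ext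
    (f₁ := Finsupp.lapply (a + b) ∘ₗ B.repr.toLinearMap ∘ₗ LinearMap.mulRight K (B b))
    (f₂ := (σ a b : K) • (Finsupp.lapply a ∘ₗ B.repr.toLinearMap)) fun c => by
      by_cases hc : c = a <;> simp [hB, hc]
  simpa using LinearMap.congr_fun h x

theorem repr_basis_mul_apply_add (x : C) (a b : A) :
    B.repr (B b * x) (a + b) = σ b a * B.repr x a := by
  have h := B.ext
    (f₁ := Finsupp.lapply (a + b) ∘ₗ B.repr.toLinearMap ∘ₗ LinearMap.mulLeft K (B b))
    (f₂ := (σ b a : K) • (Finsupp.lapply a ∘ₗ B.repr.toLinearMap)) fun c => by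
      by_cases hc : c = a <;> simp [hB, hc, add_comm b]
  simpa using LinearMap.congr_fun h x

theorem center_eq_span_radical :
    Subalgebra.toSubmodule (Subalgebra.center K C) = span K (B '' radical σ) := by
  refine le_antisymm (fun x hx => ?_) (span_le.mpr ?_)
  · refine B.mem_span_image.mpr fun a ha b => ?_
    have h := congrArg (fun y => B.repr y (a + b))
      ((Subalgebra.mem_center_iff (R := K)).mp hx (B b))
    simp only [repr_basis_mul_apply_add B hB, repr_mul_basis_apply_add B hB] at h
    exact Units.val_injective (mul_right_cancel₀ (Finsupp.mem_support_iff.mp ha) h).symm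
  · rintro _ ⟨a, ha, rfl⟩
    exact mem_center_of_span_eq_top B.span_eq fun b => by rw [hB, hB, ha b, add_comm]

end Module.Basis

theorem span_commutators_eq_span_compl_radical
    (hσl : ∀ a a' b, σ (a + a') b = σ a b * σ a' b)
    (hσr : ∀ a b b', σ a (b + b') = σ a b * σ a b')
    {T : A → C} (hT : ∀ a b, T a * T b = (σ a b : K) • T (a + b))
    (hspan : span K (Set.range T) = ⊤) :
    span K {x : C | ∃ y z : C, x = y * z - z * y} = span K (T '' (radical σ)ᶜ) := by
  refine le_antisymm (span_le.mpr ?_) (span_le.mpr ?_)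
  · rintro _ ⟨y, z, rfl⟩
    refine commutator_mem_of_span_eq_top hspan (fun a b => ?_) y z
    rw [commutator_eq_smul hT]
    by_cases h : σ a b = σ b a
    · simp [h]
    · refine smul_mem _ _ (subset_span ⟨a + b, fun hr => h ?_, rfl⟩)
      exact (eq_swap_add_right_iff hσl hσr a b).mp (hr b)
  · rintro _ ⟨c, hc, rfl⟩
    obtain ⟨b, hb⟩ : ∃ b, σ c b ≠ σ b c := by simpa [radical] using hc
    have hne : (σ (c - b) b : K) - σ b (c - b) ≠ 0 := by
      rwa [sub_ne_zero, Ne, Units.val_inj, ← eq_swap_add_right_iff hσl hσr, sub_add_cancel]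
    have hTc : T c =
        ((σ (c - b) b : K) - σ b (c - b))⁻¹ • (T (c - b) * T b - T b * T (c - b)) := by
      rw [commutator_eq_smul hT, sub_add_cancel, smul_smul, inv_mul_cancel₀ hne, one_smul]
    rw [hTc]
    exact smul_mem _ _ (subset_span ⟨_, _, rfl⟩)

end TwistedBasis

section QuantumTorus

variable {n : ℕ} (q : Fin (n+1) → Fin (n+1) → ℂˣ)

theorem sig_add_left (a a' b : Fin (n+1) → ℤ) : sig q (a + a') b = sig q a b * sig q a' b := by
  simp only [sig, ← Finset.prod_mul_distrib]
  refine Finset.prod_congr rfl fun i _ => Finset.prod_congr rfl fun j _ => ?_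
  split_ifs <;> simp [add_mul, zpow_add]

theorem sig_add_right (a b b' : Fin (n+1) → ℤ) : sig q a (b + b') = sig q a b * sig q a b' := by
  simp only [sig, ← Finset.prod_mul_distrib]
  refine Finset.prod_congr rfl fun i _ => Finset.prod_congr rfl fun j _ => ?_
  split_ifs <;> simp [mul_add, zpow_add]

theorem ff_eq_one_iff (a b : Fin (n+1) → ℤ) : ff q a b = 1 ↔ sig q a b = sig q b a :=
  mul_inv_eq_one

end QuantumTorus

theorem stmt8_general {n : ℕ} (q : Fin (n+1) → Fin (n+1) → ℂˣ)
    {C : Type*} [Ring C] [Algebra ℂ C]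
    (T : (Fin (n+1) → ℤ) → C)
    (hT : ∀ a b, T a * T b = ((sig q a b : ℂ)) • T (a + b))
    (hTind : LinearIndependent ℂ T)
    (hTspan : Submodule.span ℂ (Set.range T) = ⊤) :
    Submodule.span ℂ {x : C | ∃ y z : C, x = y * z - z * y} =
      Submodule.span ℂ (T '' {a | ¬ ∀ b, ff q a b = 1}) ∧
    IsCompl (Submodule.span ℂ {x : C | ∃ y z : C, x = y * z - z * y})
      (Subalgebra.toSubmodule (Subalgebra.center ℂ C)) := by
  have hrad : {a | ¬ ∀ b, ff q a b = 1} = (radical (sig q))ᶜ := by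
    ext a
    simp [radical, ff_eq_one_iff]
  let B := Module.Basis.mk hTind hTspan.ge
  have hB : ⇑B = T := Module.Basis.coe_mk _ _
  have hcomm := span_commutators_eq_span_compl_radical (sig_add_left q) (sig_add_right q) hT hTspan
  rw [hrad, hcomm, B.center_eq_span_radical (hB ▸ hT), hB]
  exact ⟨rfl, hTind.isCompl_span_image hTspan isCompl_compl.symm⟩

theorem stmt8 {n : ℕ} (q : Fin (n+1) → Fin (n+1) → ℂˣ)
    (hq1 : ∀ i, q i i = 1) (hq2 : ∀ i j, q i j = (q j i)⁻¹)
    {C : Type*} [Ring C] [Algebra ℂ C]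
    (T : (Fin (n+1) → ℤ) → C)
    (hT : ∀ a b, T a * T b = ((sig q a b : ℂ)) • T (a + b))
    (hT0 : T 0 = 1)
    (hTind : LinearIndependent ℂ T)
    (hTspan : Submodule.span ℂ (Set.range T) = ⊤) :
    Submodule.span ℂ {x : C | ∃ y z : C, x = y * z - z * y} =
      Submodule.span ℂ (T '' {a | ¬ ∀ b, ff q a b = 1}) ∧
    IsCompl (Submodule.span ℂ {x : C | ∃ y z : C, x = y * z - z * y})
      (Subalgebra.toSubmodule (Subalgebra.center ℂ C)) :=
  stmt8_general q T hT hTind hTspan
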